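/- arXiv:1003.1219 — 2 statements merged into one kernel-verified Lean document; each statement's English description precedes it below -/
import Mathlib

section
/- With abelian recollement gluing data, the intermediate extension is characterized uniquely (first assertion of the lemma on properties of j_!*): if X is an object of 𝒜 equipped with an isomorphism φ : j^* X ≅ N, and X has no nonzero subobject supported on Z and no nonzero quotient supported on Z, then there is an isomorphism X ≅ j_!* N, unique among isomorphisms compatible with φ and the canonical identification j^*(j_!* N) ≅ N. -/
/-!
Abelian recollement gluing data, abstracting the open immersion `j : U → S`:
abelian categories `A` and `B` (the latter playing the role of `𝒜_U`), an exact
functor `jstar : A ⥤ B` with a left adjoint `jlow` (`j_!`) and a right adjoint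
`jup` (`j_*`), such that the unit of `j_! ⊣ j^*` and the counit of `j^* ⊣ j_*`
are isomorphisms.  For `N : B`, `cmap N : j_! N ⟶ j_* N` is the unique morphism
whose image under `j^*` is `id_N` (under the canonical identifications), and the
intermediate extension `j_!* N` is its image.  "`X` is supported on `Z`" means
`j^* X ≅ 0`, i.e. `IsZero (jstar.obj X)`.

The adjuncts `α : j_! N ⟶ X` of `φ⁻¹` and `β : X ⟶ j_* N` of `φ` compose to `c_N`, and
`j^*` sends both to isomorphisms. As `j^*` is exact, `coker α` and `ker β` are supported
on `Z`, hence zero: `α` is epi, `β` is mono, and the epi–mono factorisation `α ≫ β = c_N`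
identifies `X` with the image `j_!* N`. Two compatible isomorphisms agree after `j^*`, and a
morphism out of `X` killed by `j^*` vanishes, its image being a quotient of `X` supported on `Z`.
-/

open CategoryTheory CategoryTheory.Limits

variable {A : Type*} [Category A] [Abelian A]
variable {B : Type*} [Category B] [Abelian B]

/-- The canonical morphism `c_N : j_! N ⟶ j_* N`, corresponding under the
adjunction `j_! ⊣ j^*` to the inverse of the counit `j^* j_* N ≅ N`. -/
noncomputable def cmap (jstar : A ⥤ B) (jlow jup : B ⥤ A)
    (adj1 : jlow ⊣ jstar) (adj2 : jstar ⊣ jup) [IsIso adj2.counit] (N : B) :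
    jlow.obj N ⟶ jup.obj N :=
  (adj1.homEquiv N (jup.obj N)).symm (inv (adj2.counit.app N))

/-- The intermediate extension `j_!* N := Im (c_N : j_! N ⟶ j_* N)`. -/
noncomputable def interExt (jstar : A ⥤ B) (jlow jup : B ⥤ A)
    (adj1 : jlow ⊣ jstar) (adj2 : jstar ⊣ jup) [IsIso adj2.counit] (N : B) : A :=
  image (cmap jstar jlow jup adj1 adj2 N)

/-- The canonical identification `j^*(j_!* N) ⟶ N`, given by applying `j^*` to
`j_!* N ↪ j_* N` and composing with the counit `j^* j_* N ≅ N`. -/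
noncomputable def kappa (jstar : A ⥤ B) (jlow jup : B ⥤ A)
    (adj1 : jlow ⊣ jstar) (adj2 : jstar ⊣ jup) [IsIso adj2.counit] (N : B) :
    jstar.obj (interExt jstar jlow jup adj1 adj2 N) ⟶ N :=
  jstar.map (image.ι (cmap jstar jlow jup adj1 adj2 N)) ≫ adj2.counit.app N

section KilledSubquotients

variable {C D : Type*} [Category C] [Abelian C] [Category D] [Abelian D]

def NoSubobjectKilledBy (F : C ⥤ D) (X : C) : Prop :=
  ∀ (K : C) (i : K ⟶ X) [Mono i], IsZero (F.obj K) → IsZero K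

def NoQuotientKilledBy (F : C ⥤ D) (X : C) : Prop :=
  ∀ (Q : C) (q : X ⟶ Q) [Epi q], IsZero (F.obj Q) → IsZero Q

variable {F : C ⥤ D}

lemma isZero_obj_kernel_of_mono_map [PreservesFiniteLimits F] {X Y : C} (f : X ⟶ Y)
    [Mono (F.map f)] : IsZero (F.obj (kernel f)) :=
  IsZero.of_mono_eq_zero _ <| by
    rw [← cancel_mono (F.map f), ← F.map_comp, kernel.condition, F.map_zero, zero_comp]

lemma isZero_obj_cokernel_of_epi_map [PreservesFiniteColimits F] {X Y : C} (f : X ⟶ Y)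
    [Epi (F.map f)] : IsZero (F.obj (cokernel f)) :=
  IsZero.of_epi_eq_zero _ <| by
    rw [← cancel_epi (F.map f), ← F.map_comp, cokernel.condition, F.map_zero, comp_zero]

lemma NoSubobjectKilledBy.mono_of_mono_map [PreservesFiniteLimits F] {X Y : C}
    (hX : NoSubobjectKilledBy F X) (f : X ⟶ Y) [Mono (F.map f)] : Mono f :=
  Abelian.mono_of_kernel_ι_eq_zero _ <|
    (hX _ (kernel.ι f) (isZero_obj_kernel_of_mono_map f)).eq_of_src _ _

lemma NoQuotientKilledBy.epi_of_epi_map [PreservesFiniteColimits F] {X Y : C}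
    (hY : NoQuotientKilledBy F Y) (f : X ⟶ Y) [Epi (F.map f)] : Epi f :=
  Abelian.epi_of_cokernel_π_eq_zero _ <|
    (hY _ (cokernel.π f) (isZero_obj_cokernel_of_epi_map f)).eq_of_tgt _ _

lemma NoQuotientKilledBy.eq_zero_of_map_eq_zero [PreservesFiniteLimits F]
    [PreservesFiniteColimits F] {X Y : C} (hX : NoQuotientKilledBy F X) {f : X ⟶ Y}
    (hf : F.map f = 0) : f = 0 := by
  have hι : F.map (image.ι f) = 0 := by
    rw [← cancel_epi (F.map (factorThruImage f)), ← F.map_comp, image.fac, hf, comp_zero]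
  have hIm : IsZero (image f) := hX _ (factorThruImage f) (IsZero.of_mono_eq_zero _ hι)
  rw [← image.fac f, hIm.eq_zero_of_src (image.ι f), comp_zero]

lemma NoQuotientKilledBy.eq_of_map_eq [PreservesFiniteLimits F] [PreservesFiniteColimits F]
    {X Y : C} (hX : NoQuotientKilledBy F X) {f g : X ⟶ Y} (h : F.map f = F.map g) : f = g := by
  have : F.Additive := Functor.additive_of_preserves_binary_products F
  rw [← sub_eq_zero]
  exact hX.eq_zero_of_map_eq_zero (by rw [F.map_sub, h, sub_self])

end KilledSubquotients

namespace CategoryTheory.Adjunction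

variable {C D : Type*} [Category C] [Category D] {F : C ⥤ D} {G : D ⥤ C} (adj : F ⊣ G)

lemma map_homEquiv_symm {X : C} {Y : D} [IsIso (adj.unit.app X)] (g : X ⟶ G.obj Y) :
    G.map ((adj.homEquiv X Y).symm g) = inv (adj.unit.app X) ≫ g := by
  rw [IsIso.eq_inv_comp, ← adj.homEquiv_unit X Y, Equiv.apply_symm_apply]

lemma map_homEquiv {X : C} {Y : D} [IsIso (adj.counit.app Y)] (f : F.obj X ⟶ Y) :
    F.map (adj.homEquiv X Y f) = f ≫ inv (adj.counit.app Y) := by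
  rw [IsIso.eq_comp_inv, ← adj.homEquiv_counit, Equiv.symm_apply_apply]

end CategoryTheory.Adjunction

section Recollement

variable {C D : Type*} [Category C] [Category D] {jstar : C ⥤ D} {jlow jup : D ⥤ C}
  (adj1 : jlow ⊣ jstar) (adj2 : jstar ⊣ jup) [IsIso adj2.counit] {N : D}

lemma homEquiv_symm_comp_homEquiv_eq_cmap {X : C} (φ : jstar.obj X ≅ N) :
    (adj1.homEquiv N X).symm φ.inv ≫ adj2.homEquiv X N φ.hom =
      cmap jstar jlow jup adj1 adj2 N := by
  rw [cmap, Equiv.eq_symm_apply, adj1.homEquiv_naturality_right, Equiv.apply_symm_apply,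
    adj2.map_homEquiv, Iso.inv_hom_id_assoc]

variable [Abelian C]

noncomputable def interExt.ι : interExt jstar jlow jup adj1 adj2 N ⟶ jup.obj N :=
  image.ι (cmap jstar jlow jup adj1 adj2 N)

instance : Mono (interExt.ι adj1 adj2 (N := N)) :=
  inferInstanceAs (Mono (image.ι _))

lemma map_comp_kappa {X : C} (u : X ⟶ interExt jstar jlow jup adj1 adj2 N) :
    jstar.map u ≫ kappa jstar jlow jup adj1 adj2 N =
      (adj2.homEquiv X N).symm (u ≫ interExt.ι adj1 adj2) := by
  rw [adj2.homEquiv_counit, Functor.map_comp, Category.assoc]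
  rfl

instance mono_kappa [PreservesFiniteLimits jstar] :
    Mono (kappa jstar jlow jup adj1 adj2 N) :=
  inferInstanceAs (Mono (jstar.map (interExt.ι adj1 adj2) ≫ adj2.counit.app N))

lemma exists_iso_interExt_of_fac {X : C} (α : jlow.obj N ⟶ X) (β : X ⟶ jup.obj N) [Epi α]
    [Mono β] (h : α ≫ β = cmap jstar jlow jup adj1 adj2 N) :
    ∃ e : X ≅ interExt jstar jlow jup adj1 adj2 N, e.hom ≫ interExt.ι adj1 adj2 = β :=
  have := strongEpi_of_epi α
  ⟨image.isoStrongEpiMono α β h, image.isoStrongEpiMono_hom_comp_ι α β h⟩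

end Recollement

/-- uniqueness characterization of the intermediate extension.
If `X` carries an isomorphism `φ : j^* X ≅ N` and has no nonzero subobject nor
quotient supported on `Z`, then there is an isomorphism `X ≅ j_!* N`, unique
among isomorphisms compatible with `φ` and the canonical identification
`j^*(j_!* N) ≅ N`. -/
theorem interExt_unique_characterization
    (jstar : A ⥤ B) (jlow jup : B ⥤ A)
    (adj1 : jlow ⊣ jstar) (adj2 : jstar ⊣ jup)
    [IsIso adj1.unit] [IsIso adj2.counit]
    [PreservesFiniteLimits jstar] [PreservesFiniteColimits jstar]
    (N : B) (X : A) (φ : jstar.obj X ≅ N)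
    (hsub : ∀ (Y : A) (f : Y ⟶ X) [Mono f], IsZero (jstar.obj Y) → IsZero Y)
    (hquo : ∀ (Q : A) (g : X ⟶ Q) [Epi g], IsZero (jstar.obj Q) → IsZero Q) :
    ∃! e : X ≅ interExt jstar jlow jup adj1 adj2 N,
      jstar.map e.hom ≫ kappa jstar jlow jup adj1 adj2 N = φ.hom := by
  let α := (adj1.homEquiv N X).symm φ.inv
  let β := adj2.homEquiv X N φ.hom
  have : IsIso (jstar.map α) := by rw [adj1.map_homEquiv_symm]; infer_instance
  have : IsIso (jstar.map β) := by rw [adj2.map_homEquiv]; infer_instance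
  have : Epi α := NoQuotientKilledBy.epi_of_epi_map hquo α
  have : Mono β := NoSubobjectKilledBy.mono_of_mono_map hsub β
  obtain ⟨e, he⟩ := exists_iso_interExt_of_fac adj1 adj2 α β
    (homEquiv_symm_comp_homEquiv_eq_cmap adj1 adj2 φ)
  have hcompat : jstar.map e.hom ≫ kappa jstar jlow jup adj1 adj2 N = φ.hom := by
    rw [map_comp_kappa, he, Equiv.symm_apply_apply]
  refine ⟨e, hcompat, fun e' he' => Iso.ext (NoQuotientKilledBy.eq_of_map_eq hquo ?_)⟩
  rw [← cancel_mono (kappa jstar jlow jup adj1 adj2 N), he', hcompat]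
end

section
/- The intermediate extension commutes with duality (third assertion of the lemma on properties of j_!*): given abelian recollement gluing data together with contravariant equivalences D : 𝒜ᵒᵖ → 𝒜 and D_U : 𝒜_Uᵒᵖ → 𝒜_U and a natural isomorphism j^* ∘ D ≅ D_U ∘ (j^*)ᵒᵖ, there is for every object N of 𝒜_U an isomorphism D(j_!* N) ≅ j_!*( D_U N ). -/
/-!
Abelian recollement gluing data, abstracting the open immersion `j : U → S`:
abelian categories `A` and `B` (the latter playing the role of `𝒜_U`), an exact
functor `jstar : A ⥤ B` with a left adjoint `jlow` (`j_!`) and a right adjoint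
`jup` (`j_*`), such that the unit of `j_! ⊣ j^*` and the counit of `j^* ⊣ j_*`
are isomorphisms.  For `N : B`, `cmap N : j_! N ⟶ j_* N` is the unique morphism
whose image under `j^*` is `id_N` (under the canonical identifications), and the
intermediate extension `j_!* N` is its image.  "`X` is supported on `Z`" means
`j^* X ≅ 0`, i.e. `IsZero (jstar.obj X)`.
-/

open CategoryTheory CategoryTheory.Limits

variable {A : Type*} [Category A] [Abelian A]
variable {B : Type*} [Category B] [Abelian B]

/-!
Using `comm`, both `D ∘ j_*ᵒᵖ` and `j_! ∘ D_U` are left adjoints of `D_U⁻¹ ∘ j^*`, and both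
`D ∘ j_!ᵒᵖ` and `j_* ∘ D_U` are right adjoints of it. Since `c_N` is determined by the adjunctions
alone, uniqueness of adjoints identifies `D(c_N)` with `c_{D_U N}` up to isomorphisms of source
and target. As `D` is an exact anti-equivalence, it sends the image of `c_N` to the image of
`D(c_N)`.
-/

open Opposite

namespace CategoryTheory.Adjunction

variable {C₁ C₂ C₃ : Type*} [Category C₁] [Category C₂] [Category C₃]

instance isIso_comp_counit {F : C₁ ⥤ C₂} {G : C₂ ⥤ C₁} {H : C₂ ⥤ C₃} {I : C₃ ⥤ C₂}
    (adj₁ : F ⊣ G) (adj₂ : H ⊣ I) [IsIso adj₁.counit] [IsIso adj₂.counit] :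
    IsIso (adj₁.comp adj₂).counit := by
  have (X : C₃) : IsIso ((adj₁.comp adj₂).counit.app X) := by
    rw [comp_counit_app]
    infer_instance
  exact NatIso.isIso_of_isIso_app _

instance isIso_ofNatIsoLeft_counit {F G : C₁ ⥤ C₂} {H : C₂ ⥤ C₁} (adj : F ⊣ H) (ρ : F ≅ G)
    [IsIso adj.counit] : IsIso (adj.ofNatIsoLeft ρ).counit := by
  rw [ofNatIsoLeft_counit]
  infer_instance

instance isIso_op_counit {F : C₁ ⥤ C₂} {G : C₂ ⥤ C₁} (adj : F ⊣ G) [IsIso adj.unit] :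
    IsIso (Adjunction.op adj).counit := by
  rw [op_counit]
  infer_instance

end CategoryTheory.Adjunction

section Cmap

variable {C₁ C₂ C₃ : Type*} [Category C₁] [Category C₂] [Category C₃]

lemma homEquiv_cmap (G : C₁ ⥤ C₂) (L R : C₂ ⥤ C₁) (adjL : L ⊣ G) (adjR : G ⊣ R)
    [IsIso adjR.counit] (x : C₂) :
    adjL.homEquiv x (R.obj x) (cmap G L R adjL adjR x) = inv (adjR.counit.app x) := by
  simp [cmap]

lemma unit_comp_map_cmap (G : C₁ ⥤ C₂) (L R : C₂ ⥤ C₁) (adjL : L ⊣ G) (adjR : G ⊣ R)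
    [IsIso adjR.counit] (x : C₂) :
    adjL.unit.app x ≫ G.map (cmap G L R adjL adjR x) = inv (adjR.counit.app x) := by
  simpa [Adjunction.homEquiv_unit] using homEquiv_cmap G L R adjL adjR x

lemma leftAdjointUniq_comp_cmap_comp_rightAdjointUniq (G : C₁ ⥤ C₂) {L R L' R' : C₂ ⥤ C₁}
    (adjL : L ⊣ G) (adjR : G ⊣ R) (adjL' : L' ⊣ G) (adjR' : G ⊣ R')
    [IsIso adjR.counit] [IsIso adjR'.counit] (x : C₂) :
    (adjL'.leftAdjointUniq adjL).hom.app x ≫ cmap G L R adjL adjR x ≫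
        (adjR.rightAdjointUniq adjR').hom.app x =
      cmap G L' R' adjL' adjR' x := by
  apply (adjL'.homEquiv x (R'.obj x)).injective
  rw [homEquiv_cmap, Adjunction.homEquiv_naturality_right,
    Adjunction.homEquiv_leftAdjointUniq_hom_app, Functor.map_comp,
    reassoc_of% (unit_comp_map_cmap G L R adjL adjR x), IsIso.inv_comp_eq, IsIso.eq_comp_inv,
    Adjunction.rightAdjointUniq_hom_app_counit]

lemma cmap_ofNatIso {G G' : C₁ ⥤ C₂} {L R : C₂ ⥤ C₁} (adjL : L ⊣ G) (adjR : G ⊣ R)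
    (ρ : G ≅ G') [IsIso adjR.counit] (x : C₂) :
    cmap G' L R (adjL.ofNatIsoRight ρ) (adjR.ofNatIsoLeft ρ) x = cmap G L R adjL adjR x := by
  simp [cmap, Adjunction.homEquiv_ofNatIsoRight_symm_apply]

lemma cmap_comp_equivalence_inverse (G : C₁ ⥤ C₂) (L R : C₂ ⥤ C₁) (adjL : L ⊣ G)
    (adjR : G ⊣ R) [IsIso adjR.counit] (E : C₃ ≌ C₂) (x : C₃) :
    cmap (G ⋙ E.inverse) (E.functor ⋙ L) (E.functor ⋙ R)
        (E.toAdjunction.comp adjL) (adjR.comp E.symm.toAdjunction) x =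
      cmap G L R adjL adjR (E.functor.obj x) := by
  have h : inv ((adjR.comp E.symm.toAdjunction).counit.app x) =
      E.unit.app x ≫ E.inverse.map (inv (adjR.counit.app (E.functor.obj x))) := by
    apply IsIso.inv_eq_of_hom_inv_id
    simp
  rw [cmap, Adjunction.comp_homEquiv, Equiv.symm_trans_apply, h]
  congr 1
  rw [Equiv.symm_apply_eq, Adjunction.homEquiv_unit]
  rfl

lemma cmap_equivalence_inverse_comp (G : C₁ ⥤ C₂) (L R : C₂ ⥤ C₁) (adjL : L ⊣ G)
    (adjR : G ⊣ R) [IsIso adjR.counit] (E : C₁ ≌ C₃) (x : C₂) :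
    cmap (E.inverse ⋙ G) (L ⋙ E.functor) (R ⋙ E.functor)
        (adjL.comp E.toAdjunction) (E.symm.toAdjunction.comp adjR) x =
      E.functor.map (cmap G L R adjL adjR x) := by
  have h : inv ((E.symm.toAdjunction.comp adjR).counit.app x) =
      inv (adjR.counit.app x) ≫ G.map (E.unit.app (R.obj x)) := by
    apply IsIso.inv_eq_of_hom_inv_id
    simp
  rw [cmap, Adjunction.comp_homEquiv, Equiv.symm_trans_apply, h]
  simp [Adjunction.homEquiv_counit, cmap]

lemma cmap_op (G : C₁ ⥤ C₂) (L R : C₂ ⥤ C₁) (adjL : L ⊣ G) (adjR : G ⊣ R)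
    [IsIso adjL.unit] [IsIso adjR.counit] (x : C₂) :
    cmap G.op R.op L.op (Adjunction.op adjR) (Adjunction.op adjL) (op x) =
      (cmap G L R adjL adjR x).op := by
  have h : G.map (cmap G L R adjL adjR x) = inv (adjL.unit.app x) ≫ inv (adjR.counit.app x) :=
    (IsIso.eq_inv_comp _).2 (unit_comp_map_cmap G L R adjL adjR x)
  apply ((Adjunction.op adjR).homEquiv (op x) (L.op.obj (op x))).injective
  rw [homEquiv_cmap, Adjunction.homEquiv_unit]
  apply IsIso.inv_eq_of_hom_inv_id
  simp only [Adjunction.op_counit, Adjunction.op_unit, NatTrans.op_app, Functor.op_map,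
    Quiver.Hom.unop_op]
  rw [h, ← op_comp]
  simp

end Cmap

theorem exists_iso_comp_map_cmap_comp_iso_eq_cmap
    {C₁ C₂ C₃ C₄ : Type*} [Category C₁] [Category C₂] [Category C₃] [Category C₄]
    (G : C₁ ⥤ C₂) (L R : C₂ ⥤ C₁) (adjL : L ⊣ G) (adjR : G ⊣ R) [IsIso adjR.counit]
    (G' : C₃ ⥤ C₄) (L' R' : C₄ ⥤ C₃) (adjL' : L' ⊣ G') (adjR' : G' ⊣ R') [IsIso adjR'.counit]
    (E : C₃ ⥤ C₁) (EU : C₄ ⥤ C₂) [E.IsEquivalence] [EU.IsEquivalence]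
    (ρ : E ⋙ G ≅ G' ⋙ EU) (x : C₄) :
    ∃ (φ : L.obj (EU.obj x) ≅ E.obj (L'.obj x)) (ψ : E.obj (R'.obj x) ≅ R.obj (EU.obj x)),
      φ.hom ≫ E.map (cmap G' L' R' adjL' adjR' x) ≫ ψ.hom = cmap G L R adjL adjR (EU.obj x) := by
  let EA := E.asEquivalence
  let EB := EU.asEquivalence
  let ρ' := (CatCommSq.hInv EA G' G EB ⟨ρ⟩).iso
  let adjLE := (adjL'.comp EA.toAdjunction).ofNatIsoRight ρ'
  let adjRE := (EA.symm.toAdjunction.comp adjR').ofNatIsoLeft ρ'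
  let adjLEU := EB.toAdjunction.comp adjL
  let adjREU := adjR.comp EB.symm.toAdjunction
  have hE : E.map (cmap G' L' R' adjL' adjR' x) = cmap _ _ _ adjLE adjRE x :=
    ((cmap_ofNatIso _ _ ρ' x).trans (cmap_equivalence_inverse_comp _ _ _ _ _ EA x)).symm
  have hEU : cmap _ _ _ adjLEU adjREU x = cmap G L R adjL adjR (EU.obj x) :=
    cmap_comp_equivalence_inverse _ _ _ _ _ EB x
  refine ⟨(adjLEU.leftAdjointUniq adjLE).app x, (adjRE.rightAdjointUniq adjREU).app x, ?_⟩
  rw [hE, ← hEU]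
  exact leftAdjointUniq_comp_cmap_comp_rightAdjointUniq _ _ _ _ _ x

theorem interExt_commutes_with_duality_general
    (jstar : A ⥤ B) (jlow jup : B ⥤ A)
    (adj1 : jlow ⊣ jstar) (adj2 : jstar ⊣ jup)
    [IsIso adj1.unit] [IsIso adj2.counit]
    (D : Aᵒᵖ ⥤ A) (DU : Bᵒᵖ ⥤ B) [D.IsEquivalence] [DU.IsEquivalence]
    (comm : D ⋙ jstar ≅ jstar.op ⋙ DU)
    (N : B) :
    Nonempty
      (D.obj (Opposite.op (interExt jstar jlow jup adj1 adj2 N)) ≅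
        interExt jstar jlow jup adj1 adj2 (DU.obj (Opposite.op N))) := by
  set c := cmap jstar jlow jup adj1 adj2 N
  obtain ⟨φ, ψ, h⟩ := exists_iso_comp_map_cmap_comp_iso_eq_cmap jstar jlow jup adj1 adj2
    jstar.op jup.op jlow.op adj2.op adj1.op D DU comm (op N)
  rw [cmap_op] at h
  exact ⟨D.mapIso (imageOpOp c) ≪≫ (PreservesImage.iso D c.op).symm ≪≫
    image.compIso _ ψ.hom ≪≫ (asIso (image.preComp φ.hom _)).symm ≪≫
    image.eqToIso h⟩

/-- the intermediate extension commutes with duality.  Given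
contravariant equivalences `D : Aᵒᵖ ⥤ A` and `DU : Bᵒᵖ ⥤ B` (modeling Verdier
duality) together with a natural isomorphism `j^* ∘ D ≅ D_U ∘ (j^*)ᵒᵖ`, for
every `N : B` there is an isomorphism `D(j_!* N) ≅ j_!*(D_U N)`. -/
theorem interExt_commutes_with_duality
    (jstar : A ⥤ B) (jlow jup : B ⥤ A)
    (adj1 : jlow ⊣ jstar) (adj2 : jstar ⊣ jup)
    [IsIso adj1.unit] [IsIso adj2.counit]
    [PreservesFiniteLimits jstar] [PreservesFiniteColimits jstar]
    (D : Aᵒᵖ ⥤ A) (DU : Bᵒᵖ ⥤ B) [D.IsEquivalence] [DU.IsEquivalence]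
    (comm : D ⋙ jstar ≅ jstar.op ⋙ DU)
    (N : B) :
    Nonempty
      (D.obj (Opposite.op (interExt jstar jlow jup adj1 adj2 N)) ≅
        interExt jstar jlow jup adj1 adj2 (DU.obj (Opposite.op N))) :=
  interExt_commutes_with_duality_general jstar jlow jup adj1 adj2 D DU comm N
end
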